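/- arXiv:2408.04059 — 2 statements merged into one kernel-verified Lean document; each statement's English description precedes it below -/
import Mathlib

section
/- The subgroup N_S of Aut(F_k(G)) generated by {φ_{S,α} : α ⊆ T_S} is isomorphic to Z_2^{|T_S|}. -/
open scoped Classical symmDiff

variable {V : Type*}

/-- The `k`-token graph of `G`: vertices are the `k`-subsets of `V(G)`,
two being adjacent iff their symmetric difference is an edge of `G`. -/
def tokenGraph [DecidableEq V] (G : SimpleGraph V) (k : ℕ) :
    SimpleGraph {A : Finset V // A.card = k} where
  Adj A B := ∃ a b : V, G.Adj a b ∧ (A.1 ∆ B.1) = {a, b}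
  symm := by
    constructor
    rintro A B ⟨a, b, hab, h⟩
    exact ⟨a, b, hab, by rwa [symmDiff_comm]⟩
  loopless := by
    constructor
    rintro A ⟨a, b, hab, h⟩
    rw [symmDiff_self] at h
    exact (Finset.insert_ne_empty a {b}) h.symm

/-- `S` is a 2-cut with the same neighbours: a 2-element vertex set whose removal
disconnects `G` and whose two vertices have the same neighbours outside `S`. -/
def SameNbrCut (G : SimpleGraph V) (S : Finset V) : Prop :=
  S.card = 2 ∧ ¬ (G.induce ((↑S : Set V)ᶜ)).Preconnected ∧
    ∀ x ∈ S, ∀ y ∈ S, ∀ v ∉ S, (G.Adj x v ↔ G.Adj y v)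

/-- `A^S = (A \ S) ∪ (S \ A)`. -/
def tokenMove [DecidableEq V] (A S : Finset V) : Finset V := (A \ S) ∪ (S \ A)

/-- The connected components of `G \ S`. -/
abbrev delComp (G : SimpleGraph V) (S : Finset V) :=
  (G.induce ((↑S : Set V)ᶜ)).ConnectedComponent

/-- The distribution tuple of `A` over the components of `G \ S`. -/
noncomputable def compDist (G : SimpleGraph V) (S : Finset V) (A : Finset V)
    (c : delComp G S) : ℕ :=
  {v : ((↑S : Set V)ᶜ : Set V) | (v : V) ∈ A ∧
    (G.induce ((↑S : Set V)ᶜ)).connectedComponentMk v = c}.ncard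

/-- `T_S`: distribution tuples with `kᵢ ≤ nᵢ` summing to `k - 1`. -/
def TS (G : SimpleGraph V) (S : Finset V) (k : ℕ) : Set (delComp G S → ℕ) :=
  {t | (∀ c, t c ≤ c.supp.ncard) ∧ ∑ᶠ c, t c = k - 1}

/-- The map `φ_{S,α}` on `k`-subsets. -/
noncomputable def phiFun [DecidableEq V] (G : SimpleGraph V) (S : Finset V)
    (α : Set (delComp G S → ℕ)) (A : Finset V) : Finset V :=
  if compDist G S A ∈ α then tokenMove A S else A

/-- The map `ψ_β`, the composition of the `φ_{Sᵢ,βᵢ}`. -/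
noncomputable def psiFun [DecidableEq V] (G : SimpleGraph V) {q : ℕ}
    (S : Fin q → Finset V) (β : ∀ i, Set (delComp G (S i) → ℕ)) :
    Finset V → Finset V :=
  (List.ofFn (fun i => phiFun G (S i) (β i))).foldr (· ∘ ·) id

/-!
Whether `φ_{S,α}` replaces `A` by `A ∆ S` depends only on the distribution tuple of `A`, which
`A ∆ S` shares with `A`; a tuple in `T_S` forces `|A ∩ S| = 1`, so `k`-sets stay `k`-sets.
Hence `φ_{S,α} ∘ φ_{S,β} = φ_{S,α ∆ β}`, and `α ↦ φ_{S,α}` is a homomorphism from the Boolean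
group `(𝒫(T_S), ∆) ≅ ℤ₂^{T_S}` onto `N_S`. It is injective because every `t ∈ T_S` is the
distribution tuple of some `k`-set `A` (`k - 1` tokens off `S` placed as `t` prescribes, one on
`S`), and `A ∆ S ≠ A`.
-/

open Finset Function

lemma card_symmDiff_eq_of_two_mul_card_inter {α : Type*} [DecidableEq α] {A S : Finset α}
    (h : 2 * #(A ∩ S) = #S) : #(A ∆ S) = #A := by
  have hAS := card_sdiff_add_card_inter A S
  have hSA := card_sdiff_add_card_inter S A
  rw [inter_comm] at hSA
  rw [symmDiff_def, sup_eq_union, card_union_of_disjoint disjoint_sdiff_sdiff]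
  omega

lemma exists_finset_card_filter_eq {α β : Type*} [Fintype α] [DecidableEq β] (f : α → β)
    (t : β → ℕ) (ht : ∀ b, t b ≤ #{a | f a = b}) :
    ∃ U : Finset α, ∀ b, #{a ∈ U | f a = b} = t b := by
  choose B hB hBcard using fun b => exists_subset_card_eq (ht b)
  refine ⟨({a | a ∈ B (f a)} : Finset α), fun b => ?_⟩
  rw [← hBcard b]
  congr 1
  ext a
  simp only [mem_filter, mem_univ, true_and]
  constructor
  · rintro ⟨ha, rfl⟩; exact ha
  · intro ha
    obtain rfl : f a = b := (mem_filter.mp (hB b ha)).2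
    exact ⟨ha, rfl⟩

lemma mulSupport_mul_eq_symmDiff {ι : Type*} (f g : ι → Multiplicative (ZMod 2)) :
    mulSupport (f * g) = mulSupport f ∆ mulSupport g := by
  ext i
  simp only [mem_mulSupport, Pi.mul_apply, Set.mem_symmDiff]
  generalize f i = a; generalize g i = b
  revert a b; decide

section

variable [DecidableEq V] {G : SimpleGraph V} {S : Finset V} {k : ℕ}

lemma tokenMove_eq_symmDiff (A S : Finset V) : tokenMove A S = A ∆ S := by
  rw [symmDiff_def, sup_eq_union]; rfl

lemma compDist_eq_card_filter [Fintype V] (A : Finset V) (c : delComp G S) :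
    compDist G S A c = #{v ∈ A.subtype (· ∈ (↑S : Set V)ᶜ) |
      (G.induce ((↑S : Set V)ᶜ)).connectedComponentMk v = c} := by
  rw [compDist, Set.ncard_eq_toFinset_card']
  congr 1
  ext v
  simp

lemma compDist_symmDiff_self (A : Finset V) : compDist G S (A ∆ S) = compDist G S A := by
  funext c
  unfold compDist
  congr 1
  ext v
  have hv : (v : V) ∉ S := v.2
  simp [mem_symmDiff, hv]

lemma card_sdiff_eq_finsum_compDist [Fintype V] (A : Finset V) :
    #(A \ S) = ∑ᶠ c, compDist G S A c := by
  rw [finsum_eq_sum_of_fintype]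
  simp_rw [compDist_eq_card_filter]
  calc #(A \ S) = #(A.subtype (· ∈ (↑S : Set V)ᶜ)) := by
        rw [card_subtype, sdiff_eq_filter]; rfl
    _ = _ := card_eq_sum_card_fiberwise (fun _ _ => mem_univ _)

lemma phiFun_phiFun (α β : Set (delComp G S → ℕ)) (A : Finset V) :
    phiFun G S α (phiFun G S β A) = phiFun G S (α ∆ β) A := by
  by_cases hβ : compDist G S A ∈ β <;> by_cases hα : compDist G S A ∈ α <;>
    simp [phiFun, tokenMove_eq_symmDiff, compDist_symmDiff_self, hα, hβ, Set.mem_symmDiff]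

lemma phiFun_involutive (α : Set (delComp G S → ℕ)) : Involutive (phiFun G S α) := fun A => by
  rw [phiFun_phiFun, symmDiff_self]
  simp [phiFun]

lemma phiFun_ne_self (hS : S.Nonempty) {α : Set (delComp G S → ℕ)} {A : Finset V}
    (hA : compDist G S A ∈ α) : phiFun G S α A ≠ A := by
  rw [phiFun, if_pos hA, tokenMove_eq_symmDiff, Ne, symmDiff_eq_left]
  exact hS.ne_empty

lemma card_phiFun [Fintype V] (hS : #S = 2) (hk : 1 ≤ k) {α : Set (delComp G S → ℕ)}
    (hα : α ⊆ TS G S k) {A : Finset V} (hA : #A = k) : #(phiFun G S α A) = k := by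
  unfold phiFun
  split_ifs with hAα
  · have hsdiff : #(A \ S) = k - 1 := (card_sdiff_eq_finsum_compDist A).trans (hα hAα).2
    have := card_sdiff_add_card_inter A S
    rw [tokenMove_eq_symmDiff, card_symmDiff_eq_of_two_mul_card_inter (by omega), hA]
  · exact hA

lemma exists_card_eq_compDist [Fintype V] (hS : S.Nonempty) (hk : 1 ≤ k)
    {t : delComp G S → ℕ} (ht : t ∈ TS G S k) : ∃ A : Finset V, #A = k ∧ compDist G S A = t := by
  set mk : ((↑S : Set V)ᶜ : Set V) → delComp G S :=
    (G.induce ((↑S : Set V)ᶜ)).connectedComponentMk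
  obtain ⟨U, hU⟩ := exists_finset_card_filter_eq mk t fun c => by
    convert ht.1 c
    rw [Set.ncard_eq_toFinset_card']
    congr 1
    ext v
    simp [mk]
  obtain ⟨s, hs⟩ := hS
  have hsU : s ∉ U.map (Embedding.subtype _) := fun h => by
    obtain ⟨v, -, rfl⟩ := mem_map.mp h
    exact v.2 hs
  have hUsub : (insert s (U.map (Embedding.subtype _))).subtype (· ∈ (↑S : Set V)ᶜ) = U := by
    ext v
    have hvS : (v : V) ∉ S := v.2
    have hvs : (v : V) ≠ s := fun h => hvS (h ▸ hs)
    simp [hvs, hvS]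
  refine ⟨insert s (U.map (Embedding.subtype _)), ?_, ?_⟩
  · rw [card_insert_of_notMem hsU, card_map, card_eq_sum_card_fiberwise (f := mk) (t := univ)
      (fun _ _ => mem_univ _)]
    simp_rw [hU]
    have hsum : ∑ c, t c = k - 1 := by rw [← finsum_eq_sum_of_fintype]; exact ht.2
    omega
  · funext c
    rw [compDist_eq_card_filter, hUsub, hU]

variable [Fintype V]

noncomputable def phiPerm (hS : #S = 2) (hk : 1 ≤ k) {α : Set (delComp G S → ℕ)}
    (hα : α ⊆ TS G S k) : Equiv.Perm {A : Finset V // #A = k} :=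
  Involutive.toPerm (Subtype.map (phiFun G S α) fun _ => card_phiFun hS hk hα)
    fun A => Subtype.ext (phiFun_involutive α A)

lemma coe_phiPerm_apply (hS : #S = 2) (hk : 1 ≤ k) {α : Set (delComp G S → ℕ)}
    (hα : α ⊆ TS G S k) (A : {A : Finset V // #A = k}) :
    (phiPerm hS hk hα A : Finset V) = phiFun G S α A := rfl

noncomputable def phiHom (hS : #S = 2) (hk : 1 ≤ k) :
    (TS G S k → Multiplicative (ZMod 2)) →* Equiv.Perm {A : Finset V // #A = k} :=
  MonoidHom.mk' (fun f => phiPerm hS hk (Subtype.coe_image_subset _ (mulSupport f)))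
    fun f g => Equiv.ext fun A => Subtype.ext <| by
    rw [Equiv.Perm.mul_apply, coe_phiPerm_apply, coe_phiPerm_apply, coe_phiPerm_apply,
      phiFun_phiFun, mulSupport_mul_eq_symmDiff, Set.image_symmDiff Subtype.val_injective]

lemma coe_phiHom_apply (hS : #S = 2) (hk : 1 ≤ k) (f : TS G S k → Multiplicative (ZMod 2))
    (A : {A : Finset V // #A = k}) :
    (phiHom hS hk f A : Finset V) = phiFun G S (Subtype.val '' mulSupport f) A := rfl

lemma phiHom_injective (hS : #S = 2) (hk : 1 ≤ k) : Injective (phiHom (G := G) hS hk) := by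
  have hSne : S.Nonempty := card_pos.mp (by omega)
  rw [injective_iff_map_eq_one]
  intro f hf
  by_contra hne
  obtain ⟨t, ht⟩ := mulSupport_nonempty_iff.mpr hne
  obtain ⟨A, hA, hAt⟩ := exists_card_eq_compDist hSne hk t.2
  have hAf : compDist G S A ∈ Subtype.val '' mulSupport f := ⟨t, ht, hAt.symm⟩
  have hfix : phiFun G S (Subtype.val '' mulSupport f) A = A := by
    rw [← coe_phiHom_apply hS hk f ⟨A, hA⟩, hf]
    rfl
  exact phiFun_ne_self hSne hAf hfix

lemma range_phiHom (hS : #S = 2) (hk : 1 ≤ k) :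
    (phiHom (G := G) hS hk).range = Subgroup.closure {e : Equiv.Perm {A : Finset V // #A = k} |
      ∃ α ⊆ TS G S k, ∀ A : {A : Finset V // #A = k}, (e A : Finset V) = phiFun G S α A} := by
  refine le_antisymm ?_ (Subgroup.closure_le _ |>.mpr ?_)
  · rintro _ ⟨f, rfl⟩
    exact Subgroup.subset_closure
      ⟨_, Subtype.coe_image_subset _ (mulSupport f), coe_phiHom_apply hS hk f⟩
  · rintro e ⟨α, hα, he⟩
    refine ⟨(Subtype.val ⁻¹' α).mulIndicator fun _ => Multiplicative.ofAdd 1, Equiv.ext fun A =>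
      Subtype.ext ?_⟩
    rw [coe_phiHom_apply, he, Set.mulSupport_mulIndicator, mulSupport_const (by decide),
      Set.inter_univ, Subtype.image_preimage_coe, Set.inter_eq_right.mpr hα]

end

theorem NS_iso_Z2_pow_general [Fintype V] [DecidableEq V] (G : SimpleGraph V)
    (S : Finset V) (hS : SameNbrCut G S) (k : ℕ) (hk1 : 1 ≤ k) :
    Nonempty
      ((Subgroup.closure {e : Equiv.Perm {A : Finset V // A.card = k} |
          ∃ α ⊆ TS G S k, ∀ A : {A : Finset V // A.card = k},
            ((e A : {B : Finset V // B.card = k}) : Finset V) = phiFun G S α (↑A : Finset V)})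
        ≃* ((TS G S k) → Multiplicative (ZMod 2))) :=
  ⟨(MulEquiv.subgroupCongr (range_phiHom hS.1 hk1)).symm.trans
    (MonoidHom.ofInjective (phiHom_injective hS.1 hk1)).symm⟩

/-- `N_S = ⟨{φ_{S,α} : α ⊆ T_S}⟩ ≅ ℤ₂^{|T_S|}`. -/
theorem NS_iso_Z2_pow [Fintype V] [DecidableEq V] (G : SimpleGraph V)
    (hG : G.Connected) (S : Finset V) (hS : SameNbrCut G S) (k : ℕ)
    (hk1 : 1 ≤ k) (hk2 : k ≤ Fintype.card V - 1) :
    Nonempty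
      ((Subgroup.closure {e : Equiv.Perm {A : Finset V // A.card = k} |
          ∃ α ⊆ TS G S k, ∀ A : {A : Finset V // A.card = k},
            ((e A : {B : Finset V // B.card = k}) : Finset V) = phiFun G S α (↑A : Finset V)})
        ≃* ((TS G S k) → Multiplicative (ZMod 2))) :=
  NS_iso_Z2_pow_general G S hS k hk1
end

section
/- Let G be a connected graph on n = 2k vertices with a 2-cut with the same neighbours S, and let α ⊆ T_S with α ≠ ∅ and α ≠ T_S. Then φ_{S,α} is not of the form 𝔠 ∘ ι(f) for any automorphism f of G, where 𝔠 is the complement automorphism. -/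
open scoped Classical symmDiff

variable {V : Type*}

lemma tokenMove_insert_pair [DecidableEq V] {x y : V} (hxy : x ≠ y) {D : Finset V}
    (hx : x ∉ D) (hy : y ∉ D) : tokenMove (insert x D) {x, y} = insert y D := by
  ext v
  simp only [tokenMove, Finset.mem_union, Finset.mem_sdiff, Finset.mem_insert,
    Finset.mem_singleton]
  grind

lemma compDist_insert_of_mem [DecidableEq V] (G : SimpleGraph V) {S : Finset V} {x : V}
    (hx : x ∈ S) (A : Finset V) : compDist G S (insert x A) = compDist G S A := by
  funext c
  unfold compDist
  congr 1
  ext v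
  have hvx : (v : V) ≠ x := fun h => v.2 (h ▸ hx)
  simp [hvx]

lemma compDist_map_subtype (G : SimpleGraph V) (S : Finset V)
    (E : Finset ((↑S : Set V)ᶜ : Set V)) (c : delComp G S) :
    compDist G S (E.map (Function.Embedding.subtype _)) c =
      {v ∈ E | (G.induce ((↑S : Set V)ᶜ)).connectedComponentMk v = c}.card := by
  rw [compDist, ← Set.ncard_coe_finset]
  congr 1
  ext v
  have hv : (v : V) ∉ S := v.2
  simp [hv]

lemma exists_compDist_eq [Fintype V] (G : SimpleGraph V) (S : Finset V)
    (t : delComp G S → ℕ) (ht : ∀ c, t c ≤ c.supp.ncard) :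
    ∃ D : Finset V, Disjoint D S ∧ D.card = ∑ᶠ c, t c ∧ compDist G S D = t := by
  have : Fintype (delComp G S) := Fintype.ofFinite _
  have hpick : ∀ c : delComp G S, ∃ E ⊆ c.supp.toFinset, E.card = t c := fun c =>
    Finset.exists_subset_card_eq (by rw [← Set.ncard_eq_toFinset_card']; exact ht c)
  choose E hEc hEcard using hpick
  have hmk : ∀ c, ∀ v ∈ E c, (G.induce ((↑S : Set V)ᶜ)).connectedComponentMk v = c :=
    fun c v hv => (SimpleGraph.ConnectedComponent.mem_supp_iff _ _).mp
      (Set.mem_toFinset.mp (hEc c hv))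
  have hdisj : Set.PairwiseDisjoint (Finset.univ : Finset (delComp G S)) E := by
    intro c₁ _ c₂ _ hne
    exact Finset.disjoint_left.mpr fun v h₁ h₂ =>
      hne ((hmk c₁ v h₁).symm.trans (hmk c₂ v h₂))
  have hfilter : ∀ c, {v ∈ Finset.univ.biUnion E |
      (G.induce ((↑S : Set V)ᶜ)).connectedComponentMk v = c} = E c := by
    intro c
    ext v
    simp only [Finset.mem_filter, Finset.mem_biUnion, Finset.mem_univ, true_and]
    constructor
    · rintro ⟨⟨c', hv⟩, rfl⟩
      rwa [hmk c' v hv]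
    · exact fun hv => ⟨⟨c, hv⟩, hmk c v hv⟩
  refine ⟨(Finset.univ.biUnion E).map (Function.Embedding.subtype _), ?_, ?_, ?_⟩
  · exact Finset.disjoint_left.mpr fun v hv hvS => by
      obtain ⟨w, -, rfl⟩ := Finset.mem_map.mp hv
      exact w.2 hvS
  · rw [Finset.card_map, Finset.card_biUnion hdisj, finsum_eq_sum_of_fintype]
    exact Finset.sum_congr rfl fun c _ => hEcard c
  · funext c
    rw [compDist_map_subtype, hfilter, hEcard]

lemma exists_card_add_one_compDist_eq_of_mem_TS [Fintype V]
    (G : SimpleGraph V) {S : Finset V} {k : ℕ} (hk : 1 ≤ k) {t : delComp G S → ℕ}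
    (ht : t ∈ TS G S k) :
    ∃ D : Finset V, Disjoint D S ∧ D.card + 1 = k ∧ compDist G S D = t := by
  obtain ⟨D, hDS, hDcard, hDt⟩ := exists_compDist_eq G S t ht.1
  exact ⟨D, hDS, by rw [hDcard, ht.2]; omega, hDt⟩

theorem phi_not_complement_iota_general [Fintype V] [DecidableEq V] (G : SimpleGraph V)
    (S : Finset V) (hS : SameNbrCut G S) (k : ℕ)
    (hk1 : 1 ≤ k)
    (α : Set (delComp G S → ℕ)) (hα : α ⊆ TS G S k)
    (hne : α ≠ ∅) (hnT : α ≠ TS G S k) :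
    ¬ ∃ f : G ≃g G, ∀ A : Finset V, A.card = k →
        phiFun G S α A = (Finset.image f A)ᶜ := by
  rintro ⟨f, hf⟩
  have key : ∀ A : Finset V, A.card = k → ∀ a, f a ∈ phiFun G S α A ↔ a ∉ A :=
    fun A hA a => by rw [hf A hA, Finset.mem_compl, f.injective.mem_finset_image]
  obtain ⟨x, y, hxy, hSxy⟩ := Finset.card_eq_two.mp hS.1
  have hxS : x ∈ S := by simp [hSxy]
  have hyS : y ∈ S := by simp [hSxy]
  obtain ⟨t, htα⟩ := Set.nonempty_iff_ne_empty.mpr hne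
  obtain ⟨t', ht'T, ht'α⟩ := Set.exists_of_ssubset (hα.ssubset_of_ne hnT)
  obtain ⟨D, hDS, hDk, hDt⟩ := exists_card_add_one_compDist_eq_of_mem_TS G hk1 (hα htα)
  obtain ⟨C, hCS, hCk, hCt⟩ := exists_card_add_one_compDist_eq_of_mem_TS G hk1 ht'T
  have hxC : x ∉ C := Finset.disjoint_right.mp hCS hxS
  have hyC : y ∉ C := Finset.disjoint_right.mp hCS hyS
  have hxD : x ∉ D := Finset.disjoint_right.mp hDS hxS
  have hyD : y ∉ D := Finset.disjoint_right.mp hDS hyS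
  -- `φ` fixes `x + C` and `y + C`, so `f` maps each onto its complement, forcing `f x = y`.
  have hfix : ∀ z ∈ S, phiFun G S α (insert z C) = insert z C := fun z hz => by
    rw [phiFun, compDist_insert_of_mem G hz, hCt, if_neg ht'α]
  have hfx : f x = y := by
    have h₁ := key _ (by rw [Finset.card_insert_of_notMem hxC, hCk]) x
    have h₂ := key _ (by rw [Finset.card_insert_of_notMem hyC, hCk]) x
    rw [hfix x hxS] at h₁
    rw [hfix y hyS] at h₂
    simp only [Finset.mem_insert, true_or, not_true_eq_false, iff_false, not_or] at h₁
    simpa [hxy, hxC, h₁.2] using h₂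
  -- `φ` moves `x + D` to `y + D`, so `f x ∉ y + D`.
  have hmove := key _ (by rw [Finset.card_insert_of_notMem hxD, hDk]) x
  rw [phiFun, compDist_insert_of_mem G hxS, hDt, if_pos htα, hSxy,
    tokenMove_insert_pair hxy hxD hyD, hfx] at hmove
  simp at hmove

/-- Proposition 1, second part, `n = 2k` case: for `∅ ≠ α ≠ T_S`,
`φ_{S,α}` is not `𝔠 ∘ ι(f)` for any automorphism `f` of `G`. -/
theorem phi_not_complement_iota [Fintype V] [DecidableEq V] (G : SimpleGraph V)
    (hG : G.Connected) (S : Finset V) (hS : SameNbrCut G S) (k : ℕ)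
    (hk1 : 1 ≤ k) (hn : Fintype.card V = 2 * k)
    (α : Set (delComp G S → ℕ)) (hα : α ⊆ TS G S k)
    (hne : α ≠ ∅) (hnT : α ≠ TS G S k) :
    ¬ ∃ f : G ≃g G, ∀ A : Finset V, A.card = k →
        phiFun G S α A = (Finset.image f A)ᶜ :=
  phi_not_complement_iota_general G S hS k hk1 α hα hne hnT
end
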